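/- arXiv:1909.11907 — 5 statements merged into one kernel-verified Lean document; each statement's English description precedes it below -/
import Mathlib

section
/- Let p < 0 and 0 < q < 1. Then for every integer t ≥ 0, the weighted sum ∑_{i=0}^{t} exp(p·∑_{k=i+1}^{t}(1+k)^{-q})·(1+i)^{-2q} is bounded above by (2e^{|p|/2}/|p|)·[D_p·exp((p/2)·∑_{k=0}^{t}(1+k)^{-q}) + (1+t)^{-q}], where D_p = exp((|p|/2)·∑_{k=0}^{i_p}(1+k)^{-q}) and i_p is any integer larger than (|p|/(2q))^{1/(1-q)}. -/
/-!
Write `c = |p|/2`, `b_k = (1+k)^{-q}`, `S_n = ∑_{k ≤ n} b_k` and `h_i = b_i e^{c S_i}`, so that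
the `i`-th summand is `(h_i e^{-c S_t})²` and `h_i = exp (c S_i - q log (1+i))`. This potential is
nondecreasing from the first `n` with `q (2+n)/(1+n) ≤ c (1+n)^{1-q}` on (the condition persists),
and before that point it stays below `c S_1`, because `∑_{1<k≤n} b_k ≤ (1+n)^{1-q} log ((1+n)/2)`.
Hence `h_i ≤ e^{c S_1} + h_t` for all `i ≤ t`. Since `x e^x ≤ e^c (e^x - 1)` for `0 ≤ x ≤ c`, the sum
`∑_{i ≤ t} h_i` telescopes to at most `(e^c/c) e^{c S_t}`, and `∑ h_i² ≤ (max h_i) ∑ h_i` concludes.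
-/

open Finset Real

lemma Finset.sum_Ioc_eq_sum_range_sub {M : Type*} [AddCommGroup M] (f : ℕ → M) {m n : ℕ}
    (h : m ≤ n) :
    ∑ k ∈ Ioc m n, f k = ∑ k ∈ range (n + 1), f k - ∑ k ∈ range (m + 1), f k := by
  rw [← Ico_add_one_add_one_eq_Ioc, sum_Ico_eq_sub _ (by omega)]

namespace Real

lemma log_add_one_sub_log_le_inv {x : ℝ} (hx : 0 < x) : log (x + 1) - log x ≤ x⁻¹ := by
  have h := log_le_sub_one_of_pos (show 0 < (x + 1) / x by positivity)
  rw [log_div (by positivity) hx.ne'] at h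
  convert h using 1
  field_simp
  ring

lemma inv_add_one_le_log_add_one_sub_log {x : ℝ} (hx : 0 < x) :
    (x + 1)⁻¹ ≤ log (x + 1) - log x := by
  have h := one_sub_inv_le_log_of_pos (show 0 < (x + 1) / x by positivity)
  rw [log_div (by positivity) hx.ne'] at h
  convert h using 1
  field_simp
  ring

end Real

lemma sum_Ioc_inv_one_add_le_log_sub {m n : ℕ} (h : m ≤ n) :
    ∑ k ∈ Ioc m n, (1 + (k : ℝ))⁻¹ ≤ log (1 + n) - log (1 + m) := by
  induction n, h using Nat.le_induction with
  | base => simp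
  | succ n hmn ih =>
    rw [sum_Ioc_succ_top hmn]
    have h := inv_add_one_le_log_add_one_sub_log (show 0 < 1 + (n : ℝ) by positivity)
    push_cast
    rw [← add_assoc]
    linarith

noncomputable def stepSize (q : ℝ) (k : ℕ) : ℝ := (1 + (k : ℝ)) ^ (-q)

lemma stepSize_pos (q : ℝ) (k : ℕ) : 0 < stepSize q k := by
  unfold stepSize; positivity

lemma stepSize_le_one {q : ℝ} (hq : 0 ≤ q) (k : ℕ) : stepSize q k ≤ 1 :=
  rpow_le_one_of_one_le_of_nonpos (by simp) (by linarith)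

lemma stepSize_eq_exp (q : ℝ) (k : ℕ) : stepSize q k = exp (-(q * log (1 + k))) := by
  rw [stepSize, rpow_def_of_pos (by positivity)]
  ring_nf

lemma sum_Ioc_stepSize_le {q : ℝ} (hq : q ≤ 1) {m n : ℕ} (h : m ≤ n) :
    ∑ k ∈ Ioc m n, stepSize q k ≤ (1 + n) ^ (1 - q) * (log (1 + n) - log (1 + m)) := by
  calc ∑ k ∈ Ioc m n, stepSize q k
      ≤ ∑ k ∈ Ioc m n, (1 + (n : ℝ)) ^ (1 - q) * (1 + (k : ℝ))⁻¹ := by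
        refine sum_le_sum fun k hk => ?_
        have hkn : (k : ℝ) ≤ n := by exact_mod_cast (mem_Ioc.1 hk).2
        rw [stepSize, show -q = (1 - q) + -1 by ring, rpow_add (by positivity), rpow_neg_one]
        gcongr
    _ ≤ (1 + n) ^ (1 - q) * (log (1 + n) - log (1 + m)) := by
        rw [← mul_sum]
        gcongr
        exact sum_Ioc_inv_one_add_le_log_sub h

lemma log_one_add_le_mul_log_two (n : ℕ) : log (1 + n) ≤ n * log 2 := by
  have h : 1 + (n : ℝ) ≤ 2 ^ n := by
    simpa [one_add_one_eq_two] using one_add_mul_le_pow (show (-2 : ℝ) ≤ 1 by norm_num) n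
  calc log (1 + n) ≤ log (2 ^ n) := log_le_log (by positivity) h
    _ = n * log 2 := log_pow 2 n

noncomputable def potential (q c : ℝ) (n : ℕ) : ℝ :=
  c * ∑ k ∈ range (n + 1), stepSize q k - q * log (1 + n)

lemma exp_potential (q c : ℝ) (n : ℕ) :
    exp (potential q c n) = stepSize q n * exp (c * ∑ k ∈ range (n + 1), stepSize q k) := by
  rw [stepSize_eq_exp, ← exp_add, potential]
  ring_nf

def PastThreshold (q c : ℝ) (n : ℕ) : Prop :=
  q * (2 + n) / (1 + n) ≤ c * (1 + n) ^ (1 - q)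

section

variable {q c : ℝ}

lemma PastThreshold.mono (hq0 : 0 ≤ q) (hq1 : q ≤ 1) (hc : 0 ≤ c) {m n : ℕ}
    (h : PastThreshold q c m) (hmn : m ≤ n) : PastThreshold q c n := by
  have hmn' : (m : ℝ) ≤ n := by exact_mod_cast hmn
  calc q * (2 + n) / (1 + n) ≤ q * (2 + m) / (1 + m) := by
        rw [div_le_div_iff₀ (by positivity) (by positivity)]
        nlinarith
    _ ≤ c * (1 + m) ^ (1 - q) := h
    _ ≤ c * (1 + n) ^ (1 - q) := by gcongr

lemma potential_le_potential_succ (hq0 : 0 ≤ q) (hq1 : q ≤ 1) (hc : 0 ≤ c) {n : ℕ}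
    (h : PastThreshold q c n) : potential q c n ≤ potential q c (n + 1) := by
  have hlog := log_add_one_sub_log_le_inv (show 0 < 1 + (n : ℝ) by positivity)
  have hstep : q * (1 + (n : ℝ))⁻¹ ≤ c * stepSize q (n + 1) :=
    calc q * (1 + (n : ℝ))⁻¹ = q * (2 + n) / (1 + n) / (2 + n) := by field_simp
      _ ≤ c * (1 + n) ^ (1 - q) / (2 + n) := by gcongr; exact h
      _ ≤ c * (2 + n) ^ (1 - q) / (2 + n) := by gcongr; linarith
      _ = c * stepSize q (n + 1) := by
        rw [mul_div_assoc, ← rpow_sub_one (by positivity), stepSize]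
        push_cast
        ring_nf
  unfold potential
  rw [sum_range_succ _ (n + 1)]
  push_cast
  rw [← add_assoc]
  linarith [mul_le_mul_of_nonneg_left hlog hq0]

lemma potential_mono_of_pastThreshold (hq0 : 0 ≤ q) (hq1 : q ≤ 1) (hc : 0 ≤ c) {m n : ℕ}
    (h : PastThreshold q c m) (hmn : m ≤ n) : potential q c m ≤ potential q c n := by
  induction n, hmn using Nat.le_induction with
  | base => rfl
  | succ n hmn ih =>
    exact ih.trans (potential_le_potential_succ hq0 hq1 hc (h.mono hq0 hq1 hc hmn))

lemma potential_le_of_not_pastThreshold (hq0 : 0 ≤ q) (hq1 : q ≤ 1) (hc : 0 ≤ c) {n : ℕ}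
    (h : ¬ PastThreshold q c n) : potential q c n ≤ c * ∑ k ∈ range 2, stepSize q k := by
  rcases Nat.eq_zero_or_pos n with rfl | hn
  · have h0 : potential q c 0 = c * stepSize q 0 := by simp [potential]
    rw [h0, sum_range_succ, sum_range_one, mul_add]
    linarith [mul_nonneg hc (stepSize_pos q 1).le]
  set L := log (1 + (n : ℝ))
  have hL : log 2 ≤ L := log_le_log (by norm_num) (by norm_cast; omega)
  have hL2 : L ≤ (2 + n) * log 2 := by
    nlinarith [log_one_add_le_mul_log_two n, log_pos (show (1 : ℝ) < 2 by norm_num)]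
  have hgap : ∑ k ∈ range (n + 1), stepSize q k - ∑ k ∈ range 2, stepSize q k
      ≤ (1 + n) ^ (1 - q) * (L - log 2) := by
    rw [← sum_Ioc_eq_sum_range_sub _ hn]
    convert sum_Ioc_stepSize_le hq1 hn using 3
    norm_num
  have hfail : c * (1 + n) ^ (1 - q) ≤ q * (2 + n) / (1 + n) := (not_le.1 h).le
  have hdiff : c * (∑ k ∈ range (n + 1), stepSize q k - ∑ k ∈ range 2, stepSize q k) ≤ q * L :=
    calc _ ≤ c * (1 + n) ^ (1 - q) * (L - log 2) := by
          rw [mul_assoc]; exact mul_le_mul_of_nonneg_left hgap hc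
      _ ≤ q * (2 + n) / (1 + n) * (L - log 2) := by gcongr
      _ ≤ q * L := by
          rw [div_mul_eq_mul_div, div_le_iff₀ (by positivity)]
          nlinarith [mul_le_mul_of_nonneg_left hL2 hq0]
  unfold potential
  linarith

lemma potential_le_max (hq0 : 0 ≤ q) (hq1 : q ≤ 1) (hc : 0 ≤ c) {i t : ℕ} (hit : i ≤ t) :
    potential q c i ≤ max (c * ∑ k ∈ range 2, stepSize q k) (potential q c t) := by
  by_cases h : PastThreshold q c i
  · exact le_max_of_le_right (potential_mono_of_pastThreshold hq0 hq1 hc h hit)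
  · exact le_max_of_le_left (potential_le_of_not_pastThreshold hq0 hq1 hc h)

end

lemma mul_exp_le_exp_mul_exp_sub_one {x c : ℝ} (hx : 0 ≤ x) (hxc : x ≤ c) :
    x * exp x ≤ exp c * (exp x - 1) := by
  rw [mul_comm]
  exact mul_le_mul (exp_le_exp.2 hxc) (by linarith [add_one_le_exp x]) hx (exp_pos c).le

lemma sum_mul_exp_mul_sum_range_le {x : ℕ → ℝ} (hx0 : ∀ k, 0 ≤ x k) (hx1 : ∀ k, x k ≤ 1)
    {c : ℝ} (hc : 0 < c) (n : ℕ) :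
    ∑ i ∈ range n, x i * exp (c * ∑ k ∈ range (i + 1), x k)
      ≤ exp c / c * exp (c * ∑ k ∈ range n, x k) := by
  set T : ℕ → ℝ := fun i => exp (c * ∑ k ∈ range i, x k)
  have hstep (i : ℕ) : x i * T (i + 1) ≤ exp c / c * (T (i + 1) - T i) := by
    have h := mul_exp_le_exp_mul_exp_sub_one (mul_nonneg hc.le (hx0 i))
      (mul_le_of_le_one_right hc.le (hx1 i))
    have hT : T (i + 1) = T i * exp (c * x i) := by
      simp only [T, sum_range_succ, mul_add, exp_add]
    rw [hT, div_mul_eq_mul_div, le_div_iff₀ hc]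
    nlinarith [exp_pos (c * ∑ k ∈ range i, x k)]
  calc ∑ i ∈ range n, x i * T (i + 1) ≤ ∑ i ∈ range n, exp c / c * (T (i + 1) - T i) :=
        sum_le_sum fun i _ => hstep i
    _ = exp c / c * (T n - T 0) := by rw [← mul_sum, sum_range_sub]
    _ ≤ exp c / c * T n := by gcongr; simp [T]

theorem sum_exp_mul_stepSize_sq_le {q c : ℝ} (hq0 : 0 ≤ q) (hq1 : q ≤ 1) (hc : 0 < c) (t : ℕ) :
    ∑ i ∈ range (t + 1), exp (-(2 * c) * ∑ k ∈ Ioc i t, stepSize q k) * stepSize q i ^ 2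
      ≤ exp c / c * (exp (c * ∑ k ∈ range 2, stepSize q k) *
          exp (-c * ∑ k ∈ range (t + 1), stepSize q k) + stepSize q t) := by
  set S : ℕ → ℝ := fun n => ∑ k ∈ range (n + 1), stepSize q k
  set A := exp (c * ∑ k ∈ range 2, stepSize q k) + exp (potential q c t)
  have hterm : ∀ i ∈ range (t + 1),
      exp (-(2 * c) * ∑ k ∈ Ioc i t, stepSize q k) * stepSize q i ^ 2
        = exp (-(2 * c) * S t) * (exp (potential q c i) * exp (potential q c i)) := by
    intro i hi
    rw [sum_Ioc_eq_sum_range_sub _ (Nat.lt_succ_iff.1 (mem_range.1 hi)), stepSize_eq_exp,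
      potential, ← exp_nat_mul, ← exp_add, ← exp_add, ← exp_add]
    congr 1
    push_cast
    ring
  have hbound : ∀ i ∈ range (t + 1), exp (potential q c i) ≤ A := by
    intro i hi
    calc exp (potential q c i)
        ≤ exp (max (c * ∑ k ∈ range 2, stepSize q k) (potential q c t)) :=
          exp_le_exp.2 (potential_le_max hq0 hq1 hc.le (Nat.lt_succ_iff.1 (mem_range.1 hi)))
      _ = max (exp (c * ∑ k ∈ range 2, stepSize q k)) (exp (potential q c t)) :=
          exp_monotone.map_max
      _ ≤ A := max_le_add_of_nonneg (exp_pos _).le (exp_pos _).le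
  have hsum : ∑ i ∈ range (t + 1), exp (potential q c i) ≤ exp c / c * exp (c * S t) := by
    simpa only [exp_potential] using sum_mul_exp_mul_sum_range_le (fun k => (stepSize_pos q k).le)
      (stepSize_le_one hq0) hc (t + 1)
  have hinv : exp (-c * S t) * exp (c * S t) = 1 := by rw [← exp_add]; simp
  have hA : exp (potential q c t) = stepSize q t * exp (c * S t) := exp_potential q c t
  calc _ = exp (-(2 * c) * S t) *
          ∑ i ∈ range (t + 1), exp (potential q c i) * exp (potential q c i) := by
        rw [mul_sum]; exact sum_congr rfl hterm
    _ ≤ exp (-(2 * c) * S t) * ∑ i ∈ range (t + 1), A * exp (potential q c i) := by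
        gcongr with i hi
        exact hbound i hi
    _ ≤ exp (-(2 * c) * S t) * A * (exp c / c * exp (c * S t)) := by
        rw [← mul_sum, ← mul_assoc]
        gcongr
    _ = _ := by
        rw [show -(2 * c) * S t = -c * S t + -c * S t by ring, exp_add]
        simp only [A, hA]
        linear_combination (exp c / c * exp (c * ∑ k ∈ range 2, stepSize q k) * exp (-c * S t)
          + exp c / c * stepSize q t * (exp (-c * S t) * exp (c * S t) + 1)) * hinv

/-- Variance-sum bound: for `p < 0`, `0 < q < 1`, and any integer `t ≥ 0`,
`∑_{i=0}^{t} exp(p·∑_{k=i+1}^{t}(1+k)^{-q})·(1+i)^{-2q}`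
is at most `(2e^{|p|/2}/|p|)·[D_p·exp((p/2)·∑_{k=0}^{t}(1+k)^{-q}) + (1+t)^{-q}]`,
where `D_p = exp((|p|/2)·∑_{k=0}^{i_p}(1+k)^{-q})` and `i_p > (|p|/(2q))^{1/(1-q)}`. -/
theorem stmt_0 (p q : ℝ) (hp : p < 0) (hq0 : 0 < q) (hq1 : q < 1)
    (t : ℕ) (ip : ℕ) (hip : ((|p| / (2 * q)) ^ ((1 : ℝ) / (1 - q)) : ℝ) < ip) :
    ∑ i ∈ Finset.range (t + 1),
        Real.exp (p * ∑ k ∈ Finset.Icc (i + 1) t, (1 + (k : ℝ)) ^ (-q)) *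
          (1 + (i : ℝ)) ^ (-(2 * q))
      ≤ (2 * Real.exp (|p| / 2) / |p|) *
        (Real.exp ((|p| / 2) * ∑ k ∈ Finset.range (ip + 1), (1 + (k : ℝ)) ^ (-q)) *
            Real.exp ((p / 2) * ∑ k ∈ Finset.range (t + 1), (1 + (k : ℝ)) ^ (-q)) +
          (1 + (t : ℝ)) ^ (-q)) := by
  simp only [show ∀ k : ℕ, (1 + (k : ℝ)) ^ (-q) = stepSize q k from fun _ => rfl]
  set c := |p| / 2 with hc_def
  have hc : 0 < c := half_pos (abs_pos.2 hp.ne)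
  have hp_eq : p = -(2 * c) := by rw [hc_def, abs_of_neg hp]; ring
  have one_le_ip : 1 ≤ ip := by
    have := (rpow_nonneg (by positivity : 0 ≤ |p| / (2 * q)) ((1 : ℝ) / (1 - q))).trans_lt hip
    exact_mod_cast this
  have hterm (i : ℕ) : (1 + (i : ℝ)) ^ (-(2 * q)) = stepSize q i ^ 2 := by
    rw [stepSize, ← rpow_natCast, ← rpow_mul (by positivity)]
    ring_nf
  have hsum : ∑ k ∈ range 2, stepSize q k ≤ ∑ k ∈ range (ip + 1), stepSize q k :=
    sum_le_sum_of_subset_of_nonneg (range_subset_range.2 (by omega))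
      fun k _ _ => (stepSize_pos q k).le
  calc _ = ∑ i ∈ range (t + 1),
        exp (-(2 * c) * ∑ k ∈ Ioc i t, stepSize q k) * stepSize q i ^ 2 := by
        simp only [hterm, Icc_add_one_left_eq_Ioc, hp_eq]
    _ ≤ exp c / c * (exp (c * ∑ k ∈ range 2, stepSize q k) *
          exp (-c * ∑ k ∈ range (t + 1), stepSize q k) + stepSize q t) :=
        sum_exp_mul_stepSize_sq_le hq0.le hq1.le hc t
    _ ≤ _ := by
        rw [show 2 * exp c / |p| = exp c / c by rw [hc_def]; field_simp,
          show p / 2 = -c by rw [hp_eq]; ring]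
        gcongr
end

section
/- Let 0 < ν < 1, c_β > 0, λ_w < 0, and β_k = c_β/(1+k)^ν. Then for any integers 0 ≤ τ ≤ t, ∑_{i=0}^{τ} exp(λ_w·∑_{k=i+1}^{t} β_k)·β_i ≤ (e^{|λ_w| c_β}/|λ_w|)·exp((λ_w c_β/(1-ν))·((1+t)^{1-ν} − (1+τ)^{1-ν})). -/
open Finset Real

/-!
Write `f x = cβ x^(-ν)`, so that `β_i = f (i + 1)`, and `F x = cβ x^(1-ν) / (1-ν)` for its
antiderivative. As `f` decreases, `β_i ≤ F (i+1) - F i`; as `f` is convex, the trapezoid rule gives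
`F (t+1) - F (i+1) ≤ ∑_{k=i+1}^t β_k + β_i / 2`. With `u = |λ| β_i`, the `i`-th summand is thus at
most `e^{λ (F (t+1) - F (i+1))} e^{u/2} β_i`, and `u e^{u/2} ≤ e^u - 1 ≤ e^{|λ| cβ} (1 - e^{-u})`
bounds it by `e^{|λ| cβ} / |λ|` times the increment of `i ↦ e^{λ (F (t+1) - F i)}` on `[i, i+1]`.
The sum telescopes. Only half of `β_i` is lost in the trapezoid step, which is why a single factor
`e^{|λ| cβ}` suffices.
-/

theorem ConvexOn.intervalIntegral_le_mul_add_div_two {f : ℝ → ℝ} {a b : ℝ} (hab : a ≤ b)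
    (hf : ConvexOn ℝ (Set.Icc a b) f) (hfi : IntervalIntegrable f MeasureTheory.volume a b) :
    ∫ x in a..b, f x ≤ (b - a) * (f a + f b) / 2 := by
  rcases hab.eq_or_lt with rfl | hab
  · simp
  set s := (f b - f a) / (b - a)
  have hchord : ∀ x ∈ Set.Ioo a b, f x ≤ f a + (x - a) * s := by
    rintro x ⟨hax, hxb⟩
    rw [← sub_le_iff_le_add', mul_div_assoc', le_div_iff₀ (sub_pos.2 hab)]
    linarith [hf.secant_mono_aux1 (Set.left_mem_Icc.2 hab.le) (Set.right_mem_Icc.2 hab.le) hax hxb]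
  calc ∫ x in a..b, f x ≤ ∫ x in a..b, f a + (x - a) * s :=
        intervalIntegral.integral_mono_on_of_le_Ioo hab.le hfi
          (Continuous.intervalIntegrable (by fun_prop) _ _) hchord
    _ = (b - a) * (f a + f b) / 2 := by
        rw [intervalIntegral.integral_add intervalIntegrable_const
          (Continuous.intervalIntegrable (by fun_prop) _ _)]
        simp only [intervalIntegral.integral_const, intervalIntegral.integral_mul_const,
          intervalIntegral.integral_comp_sub_right fun x ↦ x, integral_id, smul_eq_mul, s]
        field_simp [(sub_pos.2 hab).ne']
        ring

theorem Real.convexOn_rpow_of_nonpos {q : ℝ} (hq : q ≤ 0) :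
    ConvexOn ℝ (Set.Ioi 0) fun x : ℝ ↦ x ^ q := by
  have hlog : ConvexOn ℝ (Set.Ioi 0) fun x ↦ q * log x := by
    simpa using strictConcaveOn_log_Ioi.concaveOn.neg.smul (neg_nonneg.2 hq)
  have hcont : ContinuousOn (fun x ↦ q * log x) (Set.Ioi 0) :=
    continuousOn_const.mul (continuousOn_log.mono fun _ hx ↦ (Set.mem_Ioi.1 hx).ne')
  refine ((convexOn_exp.subset (Set.subset_univ _) ?_).comp hlog
    (exp_monotone.monotoneOn _)).congr fun x hx ↦ ?_
  · exact Real.convex_iff_isPreconnected.2 (isPreconnected_Ioi.image _ hcont)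
  · simp [rpow_def_of_pos (Set.mem_Ioi.1 hx), mul_comm]

section RpowIncrement

variable {ν : ℝ}

theorem integral_rpow_neg_add_one (hν1 : ν < 1) (a : ℝ) :
    ∫ x in a..a + 1, x ^ (-ν) = ((a + 1) ^ (1 - ν) - a ^ (1 - ν)) / (1 - ν) := by
  rw [integral_rpow (Or.inl (by linarith)), neg_add_eq_sub]

theorem add_one_rpow_neg_le_sub_rpow_div (hν0 : 0 ≤ ν) (hν1 : ν < 1) {a : ℝ} (ha : 0 ≤ a) :
    (a + 1) ^ (-ν) ≤ ((a + 1) ^ (1 - ν) - a ^ (1 - ν)) / (1 - ν) := by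
  rw [← integral_rpow_neg_add_one hν1]
  calc (a + 1) ^ (-ν) = ∫ _ in a..a + 1, (a + 1) ^ (-ν) := by simp
    _ ≤ ∫ x in a..a + 1, x ^ (-ν) :=
      intervalIntegral.integral_mono_on_of_le_Ioo (by linarith) intervalIntegrable_const
        (intervalIntegral.intervalIntegrable_rpow' (by linarith))
        fun x hx ↦ rpow_le_rpow_of_nonpos (by linarith [hx.1]) hx.2.le (by linarith)

theorem sub_rpow_div_le_rpow_neg_add_rpow_neg (hν0 : 0 ≤ ν) (hν1 : ν < 1) {a : ℝ} (ha : 0 < a) :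
    ((a + 1) ^ (1 - ν) - a ^ (1 - ν)) / (1 - ν) ≤ (a ^ (-ν) + (a + 1) ^ (-ν)) / 2 := by
  have hconv : ConvexOn ℝ (Set.Icc a (a + 1)) fun x : ℝ ↦ x ^ (-ν) :=
    (convexOn_rpow_of_nonpos (by linarith)).subset (fun x hx ↦ ha.trans_le hx.1) (convex_Icc _ _)
  simpa [integral_rpow_neg_add_one hν1] using hconv.intervalIntegral_le_mul_add_div_two
    (by linarith) (intervalIntegral.intervalIntegrable_rpow' (by linarith))

end RpowIncrement

theorem mul_exp_half_le_exp_sub_one {u : ℝ} (hu : 0 ≤ u) : u * exp (u / 2) ≤ exp u - 1 := by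
  have hsinh : u / 2 ≤ sinh (u / 2) := self_le_sinh_iff.2 (by linarith)
  have hexp : exp u - 1 = 2 * sinh (u / 2) * exp (u / 2) := by
    rw [sinh_eq, mul_div_cancel₀ _ two_ne_zero, sub_mul, ← exp_add, ← exp_add]
    simp
  rw [hexp]
  exact mul_le_mul_of_nonneg_right (by linarith) (exp_pos _).le

theorem exp_mul_mul_le_mul_sub_exp {l b c S D E : ℝ} (hl : l < 0) (hb : 0 ≤ b) (hbc : b ≤ c)
    (hbE : b ≤ E - D) (hDS : D ≤ S + b / 2) :
    exp (l * S) * b ≤ exp (|l| * c) / |l| * (exp (l * D) - exp (l * E)) := by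
  obtain ⟨L, hL, rfl⟩ : ∃ L, 0 < L ∧ l = -L := ⟨-l, by linarith, by ring⟩
  rw [abs_neg, abs_of_pos hL]
  set u := L * b
  calc exp (-L * S) * b ≤ exp (-L * D) * (exp (u / 2) * b) := by
        rw [← mul_assoc, ← exp_add]
        gcongr
        nlinarith
    _ ≤ exp (-L * D) * ((exp u - 1) / L) := by
        gcongr
        rw [le_div_iff₀ hL]
        linarith [mul_exp_half_le_exp_sub_one (by positivity : 0 ≤ u)]
    _ = exp (-L * D) * (exp u * (1 - exp (-u))) / L := by
        rw [mul_sub, mul_one, ← exp_add, add_neg_cancel, exp_zero, mul_div_assoc]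
    _ ≤ exp (-L * D) * (exp (L * c) * (1 - exp (-L * (E - D)))) / L := by
        gcongr
        · exact sub_nonneg.2 (exp_le_one_iff.2 (neg_nonpos.2 (by positivity)))
        all_goals nlinarith
    _ = exp (L * c) / L * (exp (-L * D) - exp (-L * E)) := by
        rw [show -L * E = -L * D + -L * (E - D) by ring, exp_add]
        ring

section Telescoping

variable {β G : ℕ → ℝ}

theorem sub_le_sum_Icc_add_half (hβ : ∀ k, 0 ≤ β k)
    (htrap : ∀ k, G (k + 2) - G (k + 1) ≤ (β k + β (k + 1)) / 2) {i t : ℕ} (hit : i ≤ t) :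
    G (t + 1) - G (i + 1) ≤ ∑ k ∈ Icc (i + 1) t, β k + β i / 2 := by
  suffices h : G (t + 1) - G (i + 1) + β t / 2 ≤ ∑ k ∈ Icc (i + 1) t, β k + β i / 2 by
    linarith [hβ t]
  induction t, hit using Nat.le_induction with
  | base => simp
  | succ t hit ih =>
    rw [sum_Icc_succ_top (by omega)]
    linarith [htrap t]

theorem sum_exp_mul_le_of_trapezoid {l c : ℝ} (hl : l < 0) (hβ : ∀ k, 0 ≤ β k)
    (hβc : ∀ k, β k ≤ c) (hstep : ∀ k, β k ≤ G (k + 1) - G k)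
    (htrap : ∀ k, G (k + 2) - G (k + 1) ≤ (β k + β (k + 1)) / 2) {τ t : ℕ} (hτt : τ ≤ t) :
    ∑ i ∈ range (τ + 1), exp (l * ∑ k ∈ Icc (i + 1) t, β k) * β i
      ≤ exp (|l| * c) / |l| * exp (l * (G (t + 1) - G (τ + 1))) := by
  set K := exp (|l| * c) / |l|
  have hterm : ∀ i ∈ range (τ + 1), exp (l * ∑ k ∈ Icc (i + 1) t, β k) * β i
      ≤ K * (exp (l * (G (t + 1) - G (i + 1))) - exp (l * (G (t + 1) - G i))) := by
    intro i hi
    exact exp_mul_mul_le_mul_sub_exp hl (hβ i) (hβc i) (by linarith [hstep i])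
      (sub_le_sum_Icc_add_half hβ htrap (by have := mem_range.1 hi; omega))
  calc _ ≤ ∑ i ∈ range (τ + 1),
          K * (exp (l * (G (t + 1) - G (i + 1))) - exp (l * (G (t + 1) - G i))) := sum_le_sum hterm
    _ = K * (exp (l * (G (t + 1) - G (τ + 1))) - exp (l * (G (t + 1) - G 0))) := by
        rw [← mul_sum, sum_range_sub fun i ↦ exp (l * (G (t + 1) - G i))]
    _ ≤ K * exp (l * (G (t + 1) - G (τ + 1))) := by
        gcongr
        linarith [exp_pos (l * (G (t + 1) - G 0))]

end Telescoping

/-- Initial-segment bound: with `β_k = c_β/(1+k)^ν`, `λ_w < 0`, `0 < ν < 1`, for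
`0 ≤ τ ≤ t`, `∑_{i=0}^{τ} exp(λ_w·∑_{k=i+1}^{t} β_k)·β_i ≤
(e^{|λ_w| c_β}/|λ_w|)·exp((λ_w c_β/(1-ν))·((1+t)^{1-ν} − (1+τ)^{1-ν}))`. -/
theorem stmt_1 (ν cβ lw : ℝ) (hν0 : 0 < ν) (hν1 : ν < 1) (hc : 0 < cβ) (hlw : lw < 0)
    (τ t : ℕ) (hτt : τ ≤ t) :
    ∑ i ∈ Finset.range (τ + 1),
        Real.exp (lw * ∑ k ∈ Finset.Icc (i + 1) t, cβ / (1 + (k : ℝ)) ^ ν) *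
          (cβ / (1 + (i : ℝ)) ^ ν)
      ≤ (Real.exp (|lw| * cβ) / |lw|) *
        Real.exp ((lw * cβ / (1 - ν)) * ((1 + (t : ℝ)) ^ (1 - ν) - (1 + (τ : ℝ)) ^ (1 - ν))) := by
  have hβ_eq : ∀ k : ℕ, cβ / (1 + (k : ℝ)) ^ ν = cβ * ((k : ℝ) + 1) ^ (-ν) := fun k ↦ by
    rw [rpow_neg (by positivity), div_eq_mul_inv, add_comm]
  refine (sum_exp_mul_le_of_trapezoid (G := fun n : ℕ ↦ cβ / (1 - ν) * (n : ℝ) ^ (1 - ν))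
    hlw (fun k ↦ by positivity) (fun k ↦ div_le_self hc.le (one_le_rpow (by linarith) hν0.le))
    (fun k ↦ ?_) (fun k ↦ ?_) hτt).trans_eq ?_
  · have h := add_one_rpow_neg_le_sub_rpow_div hν0.le hν1 k.cast_nonneg
    rw [hβ_eq]
    push_cast
    exact (mul_le_mul_of_nonneg_left h hc.le).trans_eq (by ring)
  · have h := sub_rpow_div_le_rpow_neg_add_rpow_neg hν0.le hν1 (a := (k : ℝ) + 1) (by positivity)
    simp only [hβ_eq]
    push_cast
    rw [show (k : ℝ) + 2 = k + 1 + 1 by ring]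
    exact ((by ring : _ = _).trans_le (mul_le_mul_of_nonneg_left h hc.le)).trans_eq (by ring)
  · push_cast
    ring_nf
end

section
/- Let 0 < ν < 1, c_β > 0, λ < 0, and β_k = c_β/(1+k)^ν. Then for any integers 0 ≤ τ < t, β_t · ∑_{i=τ+1}^{t} exp(λ·∑_{k=i+1}^{t} β_k)·β_i ≤ (e^{|λ| c_β}/|λ|)·c_β/(1+t)^ν. -/
open Finset Real

lemma key_pointwise (lam cβ b : ℝ) (hlam : lam < 0) (hb : 0 < b) (hbc : b ≤ cβ) :
    b ≤ (Real.exp (-lam * cβ) / (-lam)) * (1 - Real.exp (lam * b)) := by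
  have hnl : 0 < -lam := by linarith
  have h1 : -(lam * b) * Real.exp (lam * b) ≤ 1 - Real.exp (lam * b) := by
    have hmul : Real.exp (lam * b) * Real.exp (-(lam * b)) = 1 := by
      rw [← Real.exp_add]; simp
    nlinarith [Real.add_one_le_exp (-(lam * b)), Real.exp_pos (lam * b)]
  have h2 : b ≤ b * Real.exp (-lam * cβ + lam * b) := by
    nlinarith [Real.one_le_exp (show 0 ≤ -lam * cβ + lam * b by nlinarith)]
  have h4 : Real.exp (-lam * cβ) * (-(lam * b) * Real.exp (lam * b)) ≤
      Real.exp (-lam * cβ) * (1 - Real.exp (lam * b)) :=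
    mul_le_mul_of_nonneg_left h1 (Real.exp_pos _).le
  have h5 : Real.exp (-lam * cβ) * (-(lam * b) * Real.exp (lam * b)) =
      -lam * (b * Real.exp (-lam * cβ + lam * b)) := by
    rw [Real.exp_add]; ring
  rw [div_mul_eq_mul_div, le_div_iff₀ hnl]
  nlinarith [h2, h4, h5]

/-- Tail-segment bound: with `β_k = c_β/(1+k)^ν`, `λ < 0`, `0 < ν < 1`, for
`0 ≤ τ < t`, `β_t·∑_{i=τ+1}^{t} exp(λ·∑_{k=i+1}^{t} β_k)·β_i ≤
(e^{|λ| c_β}/|λ|)·c_β/(1+t)^ν`. -/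
theorem stmt_2 (ν cβ lam : ℝ) (hν0 : 0 < ν) (hν1 : ν < 1) (hc : 0 < cβ) (hlam : lam < 0)
    (τ t : ℕ) (hτt : τ < t) :
    (cβ / (1 + (t : ℝ)) ^ ν) *
        ∑ i ∈ Finset.Icc (τ + 1) t,
          Real.exp (lam * ∑ k ∈ Finset.Icc (i + 1) t, cβ / (1 + (k : ℝ)) ^ ν) *
            (cβ / (1 + (i : ℝ)) ^ ν)
      ≤ (Real.exp (|lam| * cβ) / |lam|) * (cβ / (1 + (t : ℝ)) ^ ν) := by
  have habs : |lam| = -lam := abs_of_neg hlam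
  set β : ℕ → ℝ := fun k => cβ / (1 + (k : ℝ)) ^ ν with hβdef
  have hβpos : ∀ k : ℕ, 0 < β k := fun k =>
    div_pos hc (Real.rpow_pos_of_pos (by positivity) _)
  have hβle : ∀ k : ℕ, β k ≤ cβ := by
    intro k
    have h1 : (1 : ℝ) ≤ (1 + (k : ℝ)) ^ ν := by
      calc (1 : ℝ) = (1 : ℝ) ^ ν := (Real.one_rpow ν).symm
        _ ≤ (1 + (k : ℝ)) ^ ν := Real.rpow_le_rpow (by norm_num) (le_add_of_nonneg_right (Nat.cast_nonneg k)) hν0.le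
    rw [hβdef]
    simp only
    rw [div_le_iff₀ (by positivity)]
    exact le_mul_of_one_le_right hc.le h1
  set C : ℝ := Real.exp (-lam * cβ) / (-lam) with hCdef
  have hC : 0 ≤ C := div_nonneg (Real.exp_pos _).le (by linarith)
  set g : ℕ → ℝ := fun i => Real.exp (lam * ∑ k ∈ Finset.Icc (i + 1) t, β k) with hgdef
  have hmain :
      (∑ i ∈ Finset.Icc (τ + 1) t, g i * β i) ≤ C := by
    have hre : ∑ i ∈ Finset.Icc (τ + 1) t, g i * β i
        = ∑ j ∈ Finset.range (t - τ), g (τ + 1 + j) * β (τ + 1 + j) := by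
      rw [← Finset.Ico_add_one_right_eq_Icc, Finset.sum_Ico_eq_sum_range]
      simp [Nat.succ_sub_succ]
    rw [hre]
    have hstep : ∀ j ∈ Finset.range (t - τ),
        g (τ + 1 + j) * β (τ + 1 + j) ≤ C * (g (τ + 1 + j) - g (τ + j)) := by
      intro j hj
      rw [Finset.mem_range] at hj
      set i := τ + 1 + j with hi
      have hit : i ≤ t := by omega
      have hgsplit : g (τ + j) = g i * Real.exp (lam * β i) := by
        have h1 : (τ + j) + 1 = i := by omega
        have hsum : ∑ k ∈ Finset.Icc i t, β k = β i + ∑ k ∈ Finset.Icc (i + 1) t, β k := by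
          rw [Finset.Icc_add_one_left_eq_Ioc, Finset.add_sum_Ioc_eq_sum_Icc hit]
        show Real.exp (lam * ∑ k ∈ Finset.Icc ((τ + j) + 1) t, β k)
            = Real.exp (lam * ∑ k ∈ Finset.Icc (i + 1) t, β k) * Real.exp (lam * β i)
        rw [h1, hsum, ← Real.exp_add]
        congr 1
        ring
      have hkey := key_pointwise lam cβ (β i) hlam (hβpos i) (hβle i)
      have hgpos : 0 < g i := Real.exp_pos _
      calc g i * β i ≤ g i * (C * (1 - Real.exp (lam * β i))) :=
            mul_le_mul_of_nonneg_left hkey hgpos.le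
        _ = C * (g i - g i * Real.exp (lam * β i)) := by ring
        _ = C * (g i - g (τ + j)) := by rw [hgsplit]
    calc ∑ j ∈ Finset.range (t - τ), g (τ + 1 + j) * β (τ + 1 + j)
        ≤ ∑ j ∈ Finset.range (t - τ), C * (g (τ + 1 + j) - g (τ + j)) :=
          Finset.sum_le_sum hstep
      _ = C * ∑ j ∈ Finset.range (t - τ), (g (τ + (j + 1)) - g (τ + j)) := by
          rw [Finset.mul_sum]
          refine Finset.sum_congr rfl fun j _ => ?_
          have hh : τ + 1 + j = τ + (j + 1) := by omega
          rw [hh]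
      _ = C * (g (τ + (t - τ)) - g (τ + 0)) := by
          rw [Finset.sum_range_sub (fun j => g (τ + j))]
      _ ≤ C * 1 := by
          apply mul_le_mul_of_nonneg_left _ hC
          have h1 : g (τ + (t - τ)) = 1 := by
            have : τ + (t - τ) = t := by omega
            rw [hgdef]
            simp [this, Finset.Icc_eq_empty_of_lt (Nat.lt_succ_self t)]
          have h2 : 0 < g (τ + 0) := Real.exp_pos _
          linarith
      _ = C := mul_one C
  have hβt : 0 < β t := hβpos t
  calc β t * ∑ i ∈ Finset.Icc (τ + 1) t, g i * β i
      ≤ β t * C := mul_le_mul_of_nonneg_left hmain hβt.le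
    _ = (Real.exp (|lam| * cβ) / |lam|) * β t := by rw [habs, hCdef]; ring
end

section
/- Let λ < 0, c_α > 0, 0 < σ < 1, α_k = c_α/(1+k)^σ, and 0 < a < 1. Suppose a sequence e_i ≥ 0 satisfies e_i ≤ M for i ≤ T and e_i ≤ D·((log i + 1)/i^ν)^a for i > T, with constants M, D > 0 and 0 < ν < 1. Then ∑_{i=0}^{t} exp(λ·∑_{k=i+1}^{t} α_k)·α_i·e_i = O( exp((λ c_α/(1−σ))·((1+t)^{1−σ} − (1+T)^{1−σ})) ) + O( ((log t + 1)/t^ν)^a ), i.e., the weighted sum inherits the same polynomial-log decay rate up to an exponentially vanishing transient term. -/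
/-!
Let `w i = exp (λ ∑_{k=i+1}^t α_k)`. Since `x e^{-x} ≤ 1 - e^{-x}`, each `w i α_i` is at most
`e^{-λ c_α} / (-λ)` times the increment `w i - w (i-1)`, so the kernel `i ↦ w i α_i` has total
mass at most `e^{-λ c_α} / (-λ)`. Split the sum at `T` and at `t / 2`.
* `i ≤ T`: `w i ≤ w T`, and comparing `∑ α_k` with `∫ c_α (1+x)^{-σ}` bounds `w T` by the
  transient exponential.
* `T < i ≤ t / 2`: at least `(1+t)/4` stepsizes, each `≥ α_t`, separate `i` from `t`, so
  `w i ≤ exp (λ c_α (1+t)^{1-σ} / 4)`, which beats the `O(t²)` total size of these terms.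
* `t / 2 < i`: the rate at `i` is at most `2^{νa}` times the rate at `t`, and the kernel has
  bounded mass.
-/

open Finset Real
open scoped Nat

lemma mul_exp_neg_le_one_sub_exp_neg (x : ℝ) : x * exp (-x) ≤ 1 - exp (-x) := by
  have h := mul_le_mul_of_nonneg_right (add_one_le_exp x) (exp_pos (-x)).le
  rw [add_mul, one_mul, ← exp_add, add_neg_cancel, exp_zero] at h
  linarith

lemma add_one_rpow_sub_rpow_le {x p : ℝ} (hx : 0 < x) (hp0 : 0 ≤ p) (hp1 : p ≤ 1) :
    (x + 1) ^ p - x ^ p ≤ p * x ^ (p - 1) := by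
  have hbern := rpow_one_add_le_one_add_mul_self (s := x⁻¹) (by linarith [inv_pos.2 hx]) hp0 hp1
  have hfactor : (x + 1) ^ p = x ^ p * (1 + x⁻¹) ^ p := by
    rw [← mul_rpow hx.le (by positivity), mul_add, mul_inv_cancel₀ hx.ne', mul_one]
  rw [hfactor, rpow_sub_one hx.ne']
  calc x ^ p * (1 + x⁻¹) ^ p - x ^ p ≤ x ^ p * (1 + p * x⁻¹) - x ^ p := by gcongr
    _ = p * (x ^ p / x) := by ring

lemma pow_mul_exp_neg_mul_le {β y : ℝ} (hβ : 0 < β) (hy : 0 ≤ y) (n : ℕ) :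
    y ^ n * exp (-(β * y)) ≤ n ! / β ^ n := by
  have h := pow_div_factorial_le_exp (x := β * y) (mul_nonneg hβ.le hy) n
  rw [div_le_iff₀ (by positivity), mul_pow] at h
  rw [exp_neg, le_div_iff₀ (by positivity)]
  calc y ^ n * (exp (β * y))⁻¹ * β ^ n = β ^ n * y ^ n * (exp (β * y))⁻¹ := by ring
    _ ≤ exp (β * y) * n ! * (exp (β * y))⁻¹ := by gcongr
    _ = n ! := by field_simp

lemma exists_pow_mul_exp_neg_rpow_le {β p : ℝ} (hβ : 0 < β) (hp : 0 < p) (m : ℕ) :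
    ∃ C ≥ 0, ∀ x : ℝ, 1 ≤ x → x ^ m * exp (-(β * x ^ p)) ≤ C := by
  obtain ⟨n, hn⟩ := exists_nat_ge (m / p)
  refine ⟨n ! / β ^ n, by positivity, fun x hx => ?_⟩
  have hxm : x ^ m ≤ (x ^ p) ^ n := by
    rw [← rpow_natCast, ← rpow_natCast, ← rpow_mul (by linarith)]
    exact rpow_le_rpow_of_exponent_le hx (by rwa [div_le_iff₀ hp, mul_comm] at hn)
  calc x ^ m * exp (-(β * x ^ p)) ≤ (x ^ p) ^ n * exp (-(β * x ^ p)) := by gcongr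
    _ ≤ n ! / β ^ n := pow_mul_exp_neg_mul_le hβ (by positivity) n

noncomputable def tailWeight (lam : ℝ) (α : ℕ → ℝ) (i t : ℕ) : ℝ :=
  exp (lam * ∑ k ∈ Icc (i + 1) t, α k)

section TailWeight

variable {lam A : ℝ} {α : ℕ → ℝ}

lemma tailWeight_mono (hlam : lam ≤ 0) (hα : ∀ k, 0 ≤ α k) {i j : ℕ} (hij : i ≤ j) (t : ℕ) :
    tailWeight lam α i t ≤ tailWeight lam α j t :=
  exp_le_exp.2 <| mul_le_mul_of_nonpos_left
    (sum_le_sum_of_subset_of_nonneg (Icc_subset_Icc_left (by omega)) fun k _ _ => hα k) hlam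

lemma tailWeight_mul_le_mul_sub (hlam : lam < 0) (hα0 : ∀ k, 0 ≤ α k) (hαA : ∀ k, α k ≤ A)
    {i t : ℕ} (hit : i ≤ t) :
    tailWeight lam α i t * α i ≤ exp (-(lam * A)) / -lam *
      (tailWeight lam α i t - exp (lam * ∑ k ∈ Icc i t, α k)) := by
  have hpeel : exp (lam * ∑ k ∈ Icc i t, α k) = tailWeight lam α i t * exp (lam * α i) := by
    rw [tailWeight, ← exp_add, Icc_add_one_left_eq_Ioc, ← add_sum_Ioc_eq_sum_Icc hit]
    ring_nf
  have hgap : -lam * α i * exp (lam * A) ≤ 1 - exp (lam * α i) := by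
    calc -lam * α i * exp (lam * A) ≤ -(lam * α i) * exp (-(-(lam * α i))) := by
          rw [neg_neg, neg_mul_eq_neg_mul]
          exact mul_le_mul_of_nonneg_left
            (exp_le_exp.2 (mul_le_mul_of_nonpos_left (hαA i) hlam.le))
            (mul_nonneg (by linarith) (hα0 i))
      _ ≤ 1 - exp (lam * α i) := by
          simpa only [neg_neg] using mul_exp_neg_le_one_sub_exp_neg (-(lam * α i))
  rw [hpeel, div_mul_eq_mul_div, le_div_iff₀ (by linarith)]
  calc tailWeight lam α i t * α i * -lam
      = exp (-(lam * A)) * (tailWeight lam α i t * (-lam * α i * exp (lam * A))) := by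
        have : exp (-(lam * A)) * exp (lam * A) = 1 := by rw [← exp_add]; simp
        linear_combination (tailWeight lam α i t * α i * lam) * this
    _ ≤ exp (-(lam * A)) * (tailWeight lam α i t * (1 - exp (lam * α i))) := by
        gcongr
        exact (exp_pos _).le
    _ = _ := by ring

/-- `F i = exp (λ ∑_{k=i}^t α_k)` telescopes against the previous bound, with `F (t+1) = 1`. -/
theorem sum_range_tailWeight_mul_le (hlam : lam < 0) (hα0 : ∀ k, 0 ≤ α k)
    (hαA : ∀ k, α k ≤ A) (t : ℕ) :
    ∑ i ∈ range (t + 1), tailWeight lam α i t * α i ≤ exp (-(lam * A)) / -lam := by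
  set F : ℕ → ℝ := fun i => exp (lam * ∑ k ∈ Icc i t, α k)
  have hK : 0 ≤ exp (-(lam * A)) / -lam := div_nonneg (exp_pos _).le (by linarith)
  calc ∑ i ∈ range (t + 1), tailWeight lam α i t * α i
      ≤ ∑ i ∈ range (t + 1), exp (-(lam * A)) / -lam * (F (i + 1) - F i) :=
        sum_le_sum fun i hi =>
          tailWeight_mul_le_mul_sub hlam hα0 hαA (Nat.lt_succ_iff.1 (mem_range.1 hi))
    _ = exp (-(lam * A)) / -lam * (1 - F 0) := by
        rw [← mul_sum, sum_range_sub]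
        simp [F]
    _ ≤ exp (-(lam * A)) / -lam := by
        have : 0 < F 0 := exp_pos _
        nlinarith

theorem sum_tailWeight_mul_mul_le (hlam : lam < 0) (hα0 : ∀ k, 0 ≤ α k) (hαA : ∀ k, α k ≤ A)
    {s : Finset ℕ} {t : ℕ} (hs : s ⊆ range (t + 1)) {e : ℕ → ℝ} {B : ℝ} (hB : 0 ≤ B)
    (heB : ∀ i ∈ s, e i ≤ B) :
    ∑ i ∈ s, tailWeight lam α i t * α i * e i ≤ exp (-(lam * A)) / -lam * B := by
  have hw : ∀ i, 0 ≤ tailWeight lam α i t * α i := fun i => mul_nonneg (exp_pos _).le (hα0 i)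
  calc ∑ i ∈ s, tailWeight lam α i t * α i * e i
      ≤ (∑ i ∈ s, tailWeight lam α i t * α i) * B := by
        rw [sum_mul]; exact sum_le_sum fun i hi => mul_le_mul_of_nonneg_left (heB i hi) (hw i)
    _ ≤ (∑ i ∈ range (t + 1), tailWeight lam α i t * α i) * B :=
        mul_le_mul_of_nonneg_right (sum_le_sum_of_subset_of_nonneg hs fun i _ _ => hw i) hB
    _ ≤ exp (-(lam * A)) / -lam * B := by
        gcongr; exact sum_range_tailWeight_mul_le hlam hα0 hαA t

end TailWeight

noncomputable def stepsize (c σ : ℝ) (k : ℕ) : ℝ := c / (1 + (k : ℝ)) ^ σ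

section Stepsize

variable {lam c σ : ℝ}

lemma stepsize_nonneg (hc : 0 ≤ c) (k : ℕ) : 0 ≤ stepsize c σ k := by
  unfold stepsize; positivity

lemma stepsize_le (hc : 0 ≤ c) (hσ : 0 ≤ σ) (k : ℕ) : stepsize c σ k ≤ c :=
  div_le_self hc (one_le_rpow (by simp) hσ)

lemma stepsize_antitone (hc : 0 ≤ c) (hσ : 0 ≤ σ) : Antitone (stepsize c σ) := by
  intro i j hij
  unfold stepsize
  gcongr

lemma sub_rpow_le_sum_Icc_stepsize (hc : 0 ≤ c) (hσ0 : 0 ≤ σ) (hσ1 : σ < 1) {j t : ℕ}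
    (hjt : j ≤ t) :
    c / (1 - σ) * ((1 + t) ^ (1 - σ) - (1 + j) ^ (1 - σ)) ≤ ∑ k ∈ Icc j t, stepsize c σ k := by
  have hp : 0 < 1 - σ := by linarith
  set g : ℕ → ℝ := fun k => c / (1 - σ) * (1 + (k : ℝ)) ^ (1 - σ)
  have hstep : ∀ k, g (k + 1) - g k ≤ stepsize c σ k := by
    intro k
    have h := add_one_rpow_sub_rpow_le (x := 1 + k) (by positivity) hp.le (by linarith)
    rw [show 1 - σ - 1 = -σ by ring, rpow_neg (by positivity)] at h
    calc g (k + 1) - g k = c / (1 - σ) * ((1 + k + 1) ^ (1 - σ) - (1 + k) ^ (1 - σ)) := by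
          simp only [g]; push_cast; ring_nf
      _ ≤ c / (1 - σ) * ((1 - σ) * ((1 + (k : ℝ)) ^ σ)⁻¹) := by gcongr
      _ = stepsize c σ k := by unfold stepsize; field_simp
  calc c / (1 - σ) * ((1 + t) ^ (1 - σ) - (1 + j) ^ (1 - σ)) ≤ g (t + 1) - g j := by
        simp only [g]
        rw [← mul_sub]
        gcongr
        linarith
    _ = ∑ k ∈ Ico j (t + 1), (g (k + 1) - g k) := (sum_Ico_sub g (by omega)).symm
    _ ≤ ∑ k ∈ Icc j t, stepsize c σ k := by
        rw [← Ico_add_one_right_eq_Icc]; exact sum_le_sum fun k _ => hstep k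

lemma tailWeight_stepsize_le_exp (hlam : lam ≤ 0) (hc : 0 ≤ c) (hσ0 : 0 ≤ σ) (hσ1 : σ < 1)
    {T t : ℕ} (hTt : T ≤ t) :
    tailWeight lam (stepsize c σ) T t ≤
      exp (-(lam * c)) * exp (lam * c / (1 - σ) * ((1 + t) ^ (1 - σ) - (1 + T) ^ (1 - σ))) := by
  have hpeel := add_sum_Ioc_eq_sum_Icc (f := stepsize c σ) hTt
  have hlow := sub_rpow_le_sum_Icc_stepsize hc hσ0 hσ1 hTt
  have hT := stepsize_le hc hσ0 T
  have htail : c / (1 - σ) * ((1 + t) ^ (1 - σ) - (1 + T) ^ (1 - σ)) - c ≤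
      ∑ k ∈ Ioc T t, stepsize c σ k := by linarith
  rw [tailWeight, ← exp_add, Icc_add_one_left_eq_Ioc, mul_div_assoc, mul_assoc]
  apply exp_le_exp.2
  linarith [mul_le_mul_of_nonpos_left htail hlam]

lemma tailWeight_stepsize_le_of_two_mul_le (hlam : lam ≤ 0) (hc : 0 ≤ c) (hσ : 0 ≤ σ)
    {i t : ℕ} (ht : 1 ≤ t) (hit : 2 * i ≤ t) :
    tailWeight lam (stepsize c σ) i t ≤ exp (lam * c / 4 * (1 + t) ^ (1 - σ)) := by
  have hcard : (1 + t : ℝ) / 4 ≤ #(Icc (i + 1) t) := by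
    rw [Nat.card_Icc, Nat.cast_sub (by omega)]
    have : (2 * i : ℝ) ≤ t := by exact_mod_cast hit
    have : (1 : ℝ) ≤ t := by exact_mod_cast ht
    push_cast; linarith
  have hsum : #(Icc (i + 1) t) • stepsize c σ t ≤ ∑ k ∈ Icc (i + 1) t, stepsize c σ k :=
    card_nsmul_le_sum _ _ _ fun k hk => stepsize_antitone hc hσ (mem_Icc.1 hk).2
  have hrpow : c / 4 * (1 + t : ℝ) ^ (1 - σ) = (1 + t) / 4 * stepsize c σ t := by
    rw [stepsize, rpow_sub (by positivity), rpow_one]; ring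
  rw [nsmul_eq_mul] at hsum
  apply exp_le_exp.2
  rw [mul_div_assoc, mul_assoc]
  refine mul_le_mul_of_nonpos_left ?_ hlam
  rw [hrpow]
  exact (mul_le_mul_of_nonneg_right hcard (stepsize_nonneg hc t)).trans hsum

end Stepsize

noncomputable def logRate (ν a : ℝ) (t : ℕ) : ℝ := ((Real.log t + 1) / (t : ℝ) ^ ν) ^ a

section LogRate

variable {ν a : ℝ}

lemma logRate_nonneg (t : ℕ) : 0 ≤ logRate ν a t := by
  have := log_natCast_nonneg t
  unfold logRate; positivity

lemma logRate_le_of_le_two_mul (hν : 0 ≤ ν) (ha : 0 ≤ a) {i t : ℕ} (hi : 1 ≤ i) (hit : i ≤ t)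
    (hti : t ≤ 2 * i) : logRate ν a i ≤ 2 ^ (ν * a) * logRate ν a t := by
  have hi' : (1 : ℝ) ≤ i := by exact_mod_cast hi
  have hit' : (i : ℝ) ≤ t := by exact_mod_cast hit
  have hti' : (t : ℝ) ≤ 2 * i := by exact_mod_cast hti
  have hlogi := log_nonneg hi'
  have hbase : (log i + 1) / (i : ℝ) ^ ν ≤ 2 ^ ν * ((log t + 1) / (t : ℝ) ^ ν) := by
    have hlog := log_le_log (by positivity) hit'
    calc (log i + 1) / (i : ℝ) ^ ν ≤ (log t + 1) / ((t : ℝ) / 2) ^ ν := by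
          have : (0 : ℝ) < t := by linarith
          gcongr
          linarith
      _ = 2 ^ ν * ((log t + 1) / (t : ℝ) ^ ν) := by
          rw [div_rpow (by positivity) (by norm_num)]
          field_simp
  unfold logRate
  rw [rpow_mul (by norm_num), ← mul_rpow (by positivity) (by positivity)]
  gcongr

lemma logRate_le_natCast (hν : 0 ≤ ν) (ha0 : 0 ≤ a) (ha1 : a ≤ 1) {i t : ℕ} (hi : 1 ≤ i)
    (hit : i ≤ t) : logRate ν a i ≤ t := by
  have hi' : (1 : ℝ) ≤ i := by exact_mod_cast hi
  have hit' : (i : ℝ) ≤ t := by exact_mod_cast hit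
  have hlogi := log_nonneg hi'
  have hbase : (log i + 1) / (i : ℝ) ^ ν ≤ t := by
    have := log_le_sub_one_of_pos (show (0 : ℝ) < i by positivity)
    exact (div_le_self (by positivity) (one_le_rpow hi' hν)).trans (by linarith)
  calc logRate ν a i ≤ (t : ℝ) ^ a := by unfold logRate; gcongr
    _ ≤ (t : ℝ) ^ (1 : ℝ) := rpow_le_rpow_of_exponent_le (by linarith) ha1
    _ = t := rpow_one _

lemma inv_le_logRate (hν1 : ν ≤ 1) (ha0 : 0 ≤ a) (ha1 : a ≤ 1) {t : ℕ}
    (ht : 1 ≤ t) : (t : ℝ)⁻¹ ≤ logRate ν a t := by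
  have ht' : (1 : ℝ) ≤ t := by exact_mod_cast ht
  have hbase : (t : ℝ)⁻¹ ≤ (log t + 1) / (t : ℝ) ^ ν := by
    rw [inv_eq_one_div]
    gcongr
    · linarith [log_nonneg ht']
    · exact rpow_le_self_of_one_le ht' hν1
  calc (t : ℝ)⁻¹ = ((t : ℝ)⁻¹) ^ (1 : ℝ) := (rpow_one _).symm
    _ ≤ ((t : ℝ)⁻¹) ^ a :=
        rpow_le_rpow_of_exponent_ge (by positivity) (inv_le_one_of_one_le₀ ht') ha1
    _ ≤ logRate ν a t := by unfold logRate; gcongr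

end LogRate

section RateTransfer

variable {lam cα σ ν a D : ℝ} {e : ℕ → ℝ} {T : ℕ}

theorem sum_initial_segment_le (hlam : lam ≤ 0) (hcα : 0 ≤ cα) (hσ0 : 0 ≤ σ) (hσ1 : σ < 1)
    {M : ℝ} (hM : 0 ≤ M) (heM : ∀ i ≤ T, e i ≤ M) {t : ℕ} (hTt : T ≤ t) :
    ∑ i ∈ range (T + 1), tailWeight lam (stepsize cα σ) i t * stepsize cα σ i * e i ≤
      M * (∑ i ∈ range (T + 1), stepsize cα σ i) * exp (-(lam * cα)) *
        exp (lam * cα / (1 - σ) * ((1 + t) ^ (1 - σ) - (1 + T) ^ (1 - σ))) := by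
  have hα := stepsize_nonneg (σ := σ) hcα
  calc ∑ i ∈ range (T + 1), tailWeight lam (stepsize cα σ) i t * stepsize cα σ i * e i
      ≤ ∑ i ∈ range (T + 1), tailWeight lam (stepsize cα σ) T t * stepsize cα σ i * M := by
        refine sum_le_sum fun i hi => ?_
        have hiT := Nat.lt_succ_iff.1 (mem_range.1 hi)
        have hw := tailWeight_mono hlam hα hiT t
        calc tailWeight lam (stepsize cα σ) i t * stepsize cα σ i * e i
            ≤ tailWeight lam (stepsize cα σ) i t * stepsize cα σ i * M := by
              gcongr
              · exact mul_nonneg (exp_pos _).le (hα i)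
              · exact heM i hiT
          _ ≤ tailWeight lam (stepsize cα σ) T t * stepsize cα σ i * M := by
              gcongr
              exact hα i
    _ = M * (∑ i ∈ range (T + 1), stepsize cα σ i) * tailWeight lam (stepsize cα σ) T t := by
        rw [← sum_mul, ← mul_sum]; ring
    _ ≤ _ := by
        rw [mul_assoc _ (exp _)]
        have := sum_nonneg fun i (_ : i ∈ range (T + 1)) => hα i
        gcongr
        exact tailWeight_stepsize_le_exp hlam hcα hσ0 hσ1 hTt

theorem exists_sum_early_segment_le (hlam : lam < 0) (hcα : 0 < cα) (hσ0 : 0 ≤ σ) (hσ1 : σ < 1)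
    (hν0 : 0 ≤ ν) (hν1 : ν ≤ 1) (ha0 : 0 ≤ a) (ha1 : a ≤ 1) (hD : 0 ≤ D)
    (heD : ∀ i, T < i → e i ≤ D * logRate ν a i) :
    ∃ C ≥ 0, ∀ t, T < t →
      ∑ i ∈ (Ico (T + 1) (t + 1)).filter (fun i => 2 * i ≤ t),
          tailWeight lam (stepsize cα σ) i t * stepsize cα σ i * e i ≤ C * logRate ν a t := by
  obtain ⟨C₀, hC₀, hpoly⟩ := exists_pow_mul_exp_neg_rpow_le (β := -lam * cα / 4) (p := 1 - σ)
    (by nlinarith) (by linarith) 3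
  refine ⟨cα * D * C₀, by positivity, fun t ht => ?_⟩
  set E := exp (lam * cα / 4 * (1 + t) ^ (1 - σ))
  have ht1 : (1 : ℝ) ≤ t := by exact_mod_cast (show 1 ≤ t by omega)
  have hterm : ∀ i ∈ (Ico (T + 1) (t + 1)).filter (fun i => 2 * i ≤ t),
      tailWeight lam (stepsize cα σ) i t * stepsize cα σ i * e i ≤ E * cα * (D * t) := by
    intro i hi
    obtain ⟨⟨hiT, hit⟩, h2it⟩ := And.imp_left mem_Ico.1 (mem_filter.1 hi)
    have hα := stepsize_nonneg (σ := σ) hcα.le i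
    calc tailWeight lam (stepsize cα σ) i t * stepsize cα σ i * e i
        ≤ tailWeight lam (stepsize cα σ) i t * stepsize cα σ i * (D * t) :=
          mul_le_mul_of_nonneg_left ((heD i (by omega)).trans
            (mul_le_mul_of_nonneg_left (logRate_le_natCast hν0 ha0 ha1 (by omega) (by omega)) hD))
            (mul_nonneg (exp_pos _).le hα)
      _ ≤ E * cα * (D * t) := by
          gcongr
          · exact tailWeight_stepsize_le_of_two_mul_le hlam.le hcα.le hσ0 (by omega) h2it
          · exact stepsize_le hcα.le hσ0 i
  have hcard : (#((Ico (T + 1) (t + 1)).filter (fun i => 2 * i ≤ t)) : ℝ) ≤ t + 1 := by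
    have : #((Ico (T + 1) (t + 1)).filter (fun i => 2 * i ≤ t)) ≤ t + 1 :=
      (card_filter_le _ _).trans (by rw [Nat.card_Ico]; omega)
    exact_mod_cast this
  have hcube : ((t : ℝ) + 1) * t ≤ (1 + t) ^ 3 * (t : ℝ)⁻¹ := by
    rw [le_mul_inv_iff₀ (by linarith)]; nlinarith
  calc ∑ i ∈ (Ico (T + 1) (t + 1)).filter (fun i => 2 * i ≤ t),
        tailWeight lam (stepsize cα σ) i t * stepsize cα σ i * e i
      ≤ #((Ico (T + 1) (t + 1)).filter (fun i => 2 * i ≤ t)) • (E * cα * (D * t)) :=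
        sum_le_card_nsmul _ _ _ hterm
    _ ≤ ((t : ℝ) + 1) * (E * cα * (D * t)) := by rw [nsmul_eq_mul]; gcongr
    _ = cα * D * (((t : ℝ) + 1) * t) * E := by ring
    _ ≤ cα * D * ((1 + t) ^ 3 * (t : ℝ)⁻¹) * E := by gcongr
    _ = cα * D * ((1 + t) ^ 3 * E) * (t : ℝ)⁻¹ := by ring
    _ ≤ cα * D * C₀ * logRate ν a t := by
        have hE := hpoly (1 + t) (by linarith)
        rw [show -(-lam * cα / 4 * (1 + (t : ℝ)) ^ (1 - σ)) = lam * cα / 4 * (1 + t) ^ (1 - σ) by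
          ring] at hE
        gcongr
        exact inv_le_logRate hν1 ha0 ha1 (by omega)

theorem sum_late_segment_le (hlam : lam < 0) (hcα : 0 ≤ cα) (hσ0 : 0 ≤ σ) (hν : 0 ≤ ν)
    (ha : 0 ≤ a) (hD : 0 ≤ D) (heD : ∀ i, T < i → e i ≤ D * logRate ν a i) (t : ℕ) :
    ∑ i ∈ (Ico (T + 1) (t + 1)).filter (fun i => ¬2 * i ≤ t),
        tailWeight lam (stepsize cα σ) i t * stepsize cα σ i * e i ≤
      exp (-(lam * cα)) / -lam * (D * 2 ^ (ν * a)) * logRate ν a t := by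
  have hR := logRate_nonneg (ν := ν) (a := a) t
  rw [mul_assoc]
  refine sum_tailWeight_mul_mul_le hlam (stepsize_nonneg hcα) (stepsize_le hcα hσ0)
    (fun i hi => mem_range.2 (mem_Ico.1 (mem_filter.1 hi).1).2) (by positivity) fun i hi => ?_
  obtain ⟨⟨hiT, hit⟩, h2it⟩ := And.imp_left mem_Ico.1 (mem_filter.1 hi)
  calc e i ≤ D * logRate ν a i := heD i (by omega)
    _ ≤ D * (2 ^ (ν * a) * logRate ν a t) := by
        gcongr; exact logRate_le_of_le_two_mul hν ha (by omega) (by omega) (by omega)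
    _ = D * 2 ^ (ν * a) * logRate ν a t := by ring

end RateTransfer

theorem stmt_13_general (lam cα σ a ν M D : ℝ) (T : ℕ)
    (hlam : lam < 0) (hcα : 0 < cα) (hσ0 : 0 < σ) (hσ1 : σ < 1)
    (ha0 : 0 < a) (ha1 : a < 1) (hν0 : 0 < ν) (hν1 : ν < 1)
    (hM : 0 < M) (hD : 0 < D)
    (e : ℕ → ℝ)
    (heM : ∀ i ≤ T, e i ≤ M)
    (heD : ∀ i, T < i → e i ≤ D * ((Real.log i + 1) / (i : ℝ) ^ ν) ^ a) :
    ∃ C > 0, ∀ t, T < t →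
      ∑ i ∈ Finset.range (t + 1),
          Real.exp (lam * ∑ k ∈ Finset.Icc (i + 1) t, cα / (1 + (k : ℝ)) ^ σ) *
            (cα / (1 + (i : ℝ)) ^ σ) * e i
        ≤ C * (Real.exp ((lam * cα / (1 - σ)) *
              ((1 + (t : ℝ)) ^ (1 - σ) - (1 + (T : ℝ)) ^ (1 - σ))) +
            ((Real.log t + 1) / (t : ℝ) ^ ν) ^ a) := by
  obtain ⟨C₂, hC₂, hearly⟩ :=
    exists_sum_early_segment_le hlam hcα hσ0.le hσ1 hν0.le hν1.le ha0.le ha1.le hD.le heD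
  set C₁ := M * (∑ i ∈ range (T + 1), stepsize cα σ i) * exp (-(lam * cα))
  set C₃ := exp (-(lam * cα)) / -lam * (D * 2 ^ (ν * a))
  have hC₁ : 0 ≤ C₁ := by
    have := sum_nonneg fun i (_ : i ∈ range (T + 1)) => stepsize_nonneg (σ := σ) hcα.le i
    positivity
  have hC₃ : 0 < C₃ := by
    have := neg_pos.2 hlam
    positivity
  refine ⟨C₁ + C₂ + C₃, by positivity, fun t ht => ?_⟩
  set E := exp (lam * cα / (1 - σ) * ((1 + (t : ℝ)) ^ (1 - σ) - (1 + (T : ℝ)) ^ (1 - σ)))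
  have hE : 0 ≤ E := (exp_pos _).le
  have hR := logRate_nonneg (ν := ν) (a := a) t
  have hinit : ∑ i ∈ range (T + 1), tailWeight lam (stepsize cα σ) i t * stepsize cα σ i * e i ≤
      C₁ * E := sum_initial_segment_le hlam.le hcα.le hσ0.le hσ1 hM.le heM ht.le
  have hlate : ∑ i ∈ (Ico (T + 1) (t + 1)).filter (fun i => ¬2 * i ≤ t),
      tailWeight lam (stepsize cα σ) i t * stepsize cα σ i * e i ≤ C₃ * logRate ν a t :=
    sum_late_segment_le hlam hcα.le hσ0.le hν0.le ha0.le hD.le heD t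
  change ∑ i ∈ range (t + 1), tailWeight lam (stepsize cα σ) i t * stepsize cα σ i * e i ≤
    (C₁ + C₂ + C₃) * (E + logRate ν a t)
  rw [← sum_range_add_sum_Ico _ (show T + 1 ≤ t + 1 by omega),
    ← sum_filter_add_sum_filter_not (Ico (T + 1) (t + 1)) (fun i => 2 * i ≤ t)]
  nlinarith [hearly t ht, mul_nonneg hC₁ hR, mul_nonneg hC₂ hE, mul_nonneg hC₃.le hE]

/-- Rate transfer: if `e_i ≤ M` for `i ≤ T` and `e_i ≤ D·((log i + 1)/i^ν)^a`
for `i > T`, then `∑_{i=0}^{t} exp(λ·∑_{k=i+1}^{t} α_k)·α_i·e_i` with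
`α_k = c_α/(1+k)^σ` is bounded by a constant times
`exp((λ c_α/(1−σ))((1+t)^{1−σ} − (1+T)^{1−σ})) + ((log t + 1)/t^ν)^a`. -/
theorem stmt_13 (lam cα σ a ν M D : ℝ) (T : ℕ)
    (hlam : lam < 0) (hcα : 0 < cα) (hσ0 : 0 < σ) (hσ1 : σ < 1)
    (ha0 : 0 < a) (ha1 : a < 1) (hν0 : 0 < ν) (hν1 : ν < 1)
    (hM : 0 < M) (hD : 0 < D)
    (e : ℕ → ℝ) (he0 : ∀ i, 0 ≤ e i)
    (heM : ∀ i ≤ T, e i ≤ M)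
    (heD : ∀ i, T < i → e i ≤ D * ((Real.log i + 1) / (i : ℝ) ^ ν) ^ a) :
    ∃ C > 0, ∀ t, T < t →
      ∑ i ∈ Finset.range (t + 1),
          Real.exp (lam * ∑ k ∈ Finset.Icc (i + 1) t, cα / (1 + (k : ℝ)) ^ σ) *
            (cα / (1 + (i : ℝ)) ^ σ) * e i
        ≤ C * (Real.exp ((lam * cα / (1 - σ)) *
              ((1 + (t : ℝ)) ^ (1 - σ) - (1 + (T : ℝ)) ^ (1 - σ))) +
            ((Real.log t + 1) / (t : ℝ) ^ ν) ^ a) :=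
  stmt_13_general lam cα σ a ν M D T hlam hcα hσ0 hσ1 ha0 ha1 hν0 hν1 hM hD e heM heD
end

section
/- Let λ < 0, c > 0, 0 < ν < 1, β_k = c/(1+k)^ν, and let r > 0. Then max_{0 ≤ i ≤ t} { exp((λ/2)·∑_{k=i+1}^{t} β_k) · (1+i)^{-r} } ≤ exp((λc/(2(1−ν)))·((1+t)^{1−ν} − 1))·D + (1+t)^{-r}, where D = max_{0 ≤ i ≤ i_d} { exp(−(λ/2)·∑_{k=0}^{i} β_k)·(1+i)^{-r} } and i_d = (2r/(|λ|c))^{1/(1−ν)}. -/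
/-!
Write `S i = ∑_{k ≤ i} β_k` and `g i = -(λ/2) S i - r log (1 + i)`, so that the `i`-th term is
`exp ((λ/2) S t) · exp (g i)`. The increment `g (i+1) - g i` has the sign of
`|λ| c / 2 - r (2 + i)^ν log ((2 + i)/(1 + i))`, and the subtracted quantity is nonincreasing
in `i`. Hence once `g` starts to increase it keeps increasing, and its maximum over `[0, t]` is
attained at `0` or at `t`. At `t` the term is `(1 + t)^(-r)`; at `0` it is at most
`exp ((λ/2) S t) · D`, and `S t ≥ c ((1 + t)^(1-ν) - 1)/(1 - ν)` by comparison with `∫ x^(-ν)`.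
-/

open Finset Real

theorem le_max_of_rise_persists {α : Type*} [LinearOrder α] {f : ℕ → α}
    (hf : ∀ j, f j ≤ f (j + 1) → f (j + 1) ≤ f (j + 2)) {i t : ℕ} (hit : i ≤ t) :
    f i ≤ max (f 0) (f t) := by
  have descent : ∀ t, f (t + 1) < f t → f t ≤ f 0 := by
    intro t
    induction t with
    | zero => exact fun _ => le_rfl
    | succ t ih =>
      intro hfall
      have hfall' : f (t + 1) < f t := lt_of_not_ge fun hrise => (hf t hrise).not_gt hfall
      exact hfall'.le.trans (ih hfall')
  induction t with
  | zero => simp [Nat.le_zero.mp hit]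
  | succ t ih =>
    rcases hit.eq_or_lt with rfl | hi
    · exact le_max_right _ _
    have hi := ih (Nat.lt_succ_iff.mp hi)
    rcases le_or_gt (f t) (f (t + 1)) with hrise | hfall
    · exact hi.trans (max_le_max le_rfl hrise)
    · exact hi.trans (max_le (le_max_left _ _) ((descent t hfall).trans (le_max_left _ _)))

/- `(x + 1) log ((x + 1) / x)` is the slope of the secant of the convex function `y ↦ y log y`
between `1` and `(x + 1) / x`, and `(x + 1) / x` decreases in `x`. -/
theorem antitoneOn_add_one_mul_log_add_one_div :
    AntitoneOn (fun x : ℝ => (x + 1) * log ((x + 1) / x)) (Set.Ioi 0) := by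
  intro x (hx : 0 < x) y (hy : 0 < y) hxy
  have hslope (z : ℝ) (hz : 0 < z) :
      (z + 1) * log ((z + 1) / z) =
        ((z + 1) / z * log ((z + 1) / z) - 1 * log 1) / ((z + 1) / z - 1) := by
    field_simp
    simp
  dsimp only
  rw [hslope x hx, hslope y hy]
  refine convexOn_mul_log.secant_mono (by simp) (by simp; positivity) (by simp; positivity) ?_ ?_ ?_
  · rw [Ne, div_eq_one_iff_eq hy.ne']; linarith
  · rw [Ne, div_eq_one_iff_eq hx.ne']; linarith
  · rw [div_le_div_iff₀ hy hx]; nlinarith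

theorem antitone_rpow_mul_log_succ_div {ν : ℝ} (hν : ν ≤ 1) :
    Antitone fun n : ℕ => (2 + n : ℝ) ^ ν * log ((2 + n) / (1 + n)) := by
  intro m n hmn
  have hcast : (m : ℝ) ≤ n := by exact_mod_cast hmn
  have hsplit (k : ℕ) : (2 + k : ℝ) ^ ν * log ((2 + k) / (1 + k)) =
      (2 + k : ℝ) ^ (ν - 1) * ((1 + k + 1) * log ((1 + k + 1) / (1 + k))) := by
    rw [show (1 + k + 1 : ℝ) = 2 + k by ring, ← mul_assoc, ← rpow_add_one (by positivity)]
    ring_nf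
  simp only [hsplit]
  apply mul_le_mul (rpow_le_rpow_of_nonpos (by positivity) (by linarith) (by linarith))
  · exact antitoneOn_add_one_mul_log_add_one_div (show (0:ℝ) < 1 + m by positivity)
      (show (0:ℝ) < 1 + n by positivity) (by linarith)
  · exact mul_nonneg (by positivity) (log_nonneg ((one_le_div (by positivity)).mpr (by linarith)))
  · positivity

noncomputable def logWeight (μ c ν r : ℝ) (i : ℕ) : ℝ :=
  μ * ∑ k ∈ range (i + 1), c / (1 + k : ℝ) ^ ν - r * log (1 + i)

theorem logWeight_succ_sub (μ c ν r : ℝ) (i : ℕ) :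
    logWeight μ c ν r (i + 1) - logWeight μ c ν r i =
      (2 + i : ℝ) ^ (-ν) * (μ * c - r * ((2 + i : ℝ) ^ ν * log ((2 + i) / (1 + i)))) := by
  rw [logWeight, logWeight, sum_range_succ, log_div (by positivity) (by positivity),
    rpow_neg (by positivity)]
  push_cast
  field_simp
  ring_nf

theorem logWeight_rise_persists {μ c ν r : ℝ} (hν : ν ≤ 1) (hr : 0 ≤ r) (j : ℕ)
    (hrise : logWeight μ c ν r j ≤ logWeight μ c ν r (j + 1)) :
    logWeight μ c ν r (j + 1) ≤ logWeight μ c ν r (j + 2) := by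
  rw [← sub_nonneg, logWeight_succ_sub] at hrise ⊢
  have hgap := nonneg_of_mul_nonneg_right hrise (by positivity)
  have hu := antitone_rpow_mul_log_succ_div hν (Nat.le_succ j)
  push_cast at hu ⊢
  refine mul_nonneg (by positivity) ?_
  nlinarith [mul_le_mul_of_nonneg_left hu hr]

theorem exp_logWeight (μ c ν r : ℝ) (i : ℕ) :
    exp (logWeight μ c ν r i) =
      exp (μ * ∑ k ∈ range (i + 1), c / (1 + k : ℝ) ^ ν) * (1 + i : ℝ) ^ (-r) := by
  rw [logWeight, sub_eq_add_neg, exp_add, rpow_def_of_pos (by positivity)]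
  ring_nf

theorem div_mul_rpow_sub_one_le_sum_div_rpow {c ν : ℝ} (hc : 0 ≤ c) (hν0 : 0 ≤ ν) (hν1 : ν < 1)
    (t : ℕ) :
    c / (1 - ν) * ((1 + t : ℝ) ^ (1 - ν) - 1) ≤ ∑ k ∈ range (t + 1), c / (1 + k : ℝ) ^ ν := by
  have hanti : AntitoneOn (fun x : ℝ => x ^ (-ν)) (Set.Icc 1 (1 + t)) :=
    fun x hx y _ hxy => rpow_le_rpow_of_nonpos (by linarith [hx.1]) hxy (by linarith)
  have hint := hanti.integral_le_sum
  rw [integral_rpow (Or.inl (by linarith)), show -ν + 1 = 1 - ν by ring, one_rpow] at hint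
  calc c / (1 - ν) * ((1 + t : ℝ) ^ (1 - ν) - 1)
      = c * (((1 + t : ℝ) ^ (1 - ν) - 1) / (1 - ν)) := by ring
    _ ≤ c * ∑ k ∈ range t, (1 + k : ℝ) ^ (-ν) := mul_le_mul_of_nonneg_left hint hc
    _ ≤ c * ∑ k ∈ range (t + 1), (1 + k : ℝ) ^ (-ν) := by
      gcongr
      omega
    _ = ∑ k ∈ range (t + 1), c / (1 + k : ℝ) ^ ν := by
      rw [mul_sum]
      refine sum_congr rfl fun k _ => ?_
      rw [rpow_neg (by positivity), div_eq_mul_inv]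

theorem stmt_15_general (lam c ν r : ℝ) (hlam : lam < 0) (hc : 0 < c)
    (hν0 : 0 < ν) (hν1 : ν < 1) (hr : 0 < r)
    (t : ℕ) (idx : ℕ)
    (D : ℝ)
    (hD : ∀ j : ℕ, j ≤ idx →
      Real.exp (-(lam / 2) * ∑ k ∈ Finset.range (j + 1), c / (1 + (k : ℝ)) ^ ν) *
          (1 + (j : ℝ)) ^ (-r) ≤ D) :
    ∀ i ≤ t,
      Real.exp ((lam / 2) * ∑ k ∈ Finset.Icc (i + 1) t, c / (1 + (k : ℝ)) ^ ν) *
          (1 + (i : ℝ)) ^ (-r)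
        ≤ Real.exp ((lam * c / (2 * (1 - ν))) * ((1 + (t : ℝ)) ^ (1 - ν) - 1)) * D +
          (1 + (t : ℝ)) ^ (-r) := by
  intro i hit
  set S : ℕ → ℝ := fun n => ∑ k ∈ range (n + 1), c / (1 + (k : ℝ)) ^ ν
  set g := logWeight (-(lam / 2)) c ν r
  have hsplit : ∑ k ∈ Icc (i + 1) t, c / (1 + (k : ℝ)) ^ ν = S t - S i := by
    rw [← Ico_add_one_right_eq_Icc, sum_Ico_eq_sub _ (by omega)]
  have hweight (n : ℕ) : exp (lam / 2 * S t) * exp (g n) =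
      exp (lam / 2 * (S t - S n)) * (1 + (n : ℝ)) ^ (-r) := by
    rw [exp_logWeight, ← mul_assoc, ← exp_add]
    congr 2
    ring
  have hunimodal : exp (g i) ≤ exp (g 0) + exp (g t) :=
    (exp_le_exp.mpr (le_max_of_rise_persists (logWeight_rise_persists hν1.le hr.le) hit)).trans
      (by rw [exp_monotone.map_max]; exact max_le_add_of_nonneg (exp_nonneg _) (exp_nonneg _))
  have hdecay :
      exp (lam / 2 * S t) ≤ exp (lam * c / (2 * (1 - ν)) * ((1 + (t : ℝ)) ^ (1 - ν) - 1)) := by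
    have := mul_le_mul_of_nonpos_left (div_mul_rpow_sub_one_le_sum_div_rpow hc.le hν0.le hν1 t)
      (show lam / 2 ≤ 0 by linarith)
    rw [show lam * c / (2 * (1 - ν)) * ((1 + (t : ℝ)) ^ (1 - ν) - 1) =
      lam / 2 * (c / (1 - ν) * ((1 + (t : ℝ)) ^ (1 - ν) - 1)) by
        field_simp [(sub_pos.mpr hν1).ne']]
    exact exp_le_exp.mpr this
  have hD0 : exp (g 0) ≤ D := by simpa [g, exp_logWeight] using hD 0 (Nat.zero_le _)
  calc _ = exp (lam / 2 * S t) * exp (g i) := by rw [hweight, hsplit]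
    _ ≤ exp (lam / 2 * S t) * exp (g 0) + exp (lam / 2 * S t) * exp (g t) := by
      rw [← mul_add]; gcongr
    _ ≤ _ := by
      rw [hweight t, sub_self, mul_zero, exp_zero, one_mul]
      gcongr

/-- Maximum of kernel times polynomial decay: with `β_k = c/(1+k)^ν`, `λ < 0`,
`r > 0`, for all `0 ≤ i ≤ t`,
`exp((λ/2)·∑_{k=i+1}^{t} β_k)·(1+i)^{−r} ≤
exp((λc/(2(1−ν)))·((1+t)^{1−ν} − 1))·D + (1+t)^{−r}`, where `D` dominates the
terms `exp(−(λ/2)·∑_{k=0}^{j} β_k)·(1+j)^{−r}` for `j ≤ i_d = (2r/(|λ|c))^{1/(1−ν)}`. -/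
theorem stmt_15 (lam c ν r : ℝ) (hlam : lam < 0) (hc : 0 < c)
    (hν0 : 0 < ν) (hν1 : ν < 1) (hr : 0 < r)
    (t : ℕ) (idx : ℕ) (hidx : ((2 * r / (|lam| * c)) ^ ((1 : ℝ) / (1 - ν)) : ℝ) ≤ idx)
    (D : ℝ)
    (hD : ∀ j : ℕ, j ≤ idx →
      Real.exp (-(lam / 2) * ∑ k ∈ Finset.range (j + 1), c / (1 + (k : ℝ)) ^ ν) *
          (1 + (j : ℝ)) ^ (-r) ≤ D) :
    ∀ i ≤ t,
      Real.exp ((lam / 2) * ∑ k ∈ Finset.Icc (i + 1) t, c / (1 + (k : ℝ)) ^ ν) *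
          (1 + (i : ℝ)) ^ (-r)
        ≤ Real.exp ((lam * c / (2 * (1 - ν))) * ((1 + (t : ℝ)) ^ (1 - ν) - 1)) * D +
          (1 + (t : ℝ)) ^ (-r) :=
  stmt_15_general lam c ν r hlam hc hν0 hν1 hr t idx D hD
end
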